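/- Let K ≥ 1 and 1/2 < p₂ ≤ p₁ be real numbers, and let V̄ : (0,∞) → ℝ be a measurable locally bounded function with y^(2p₂) ≤ exp(2·V̄(y)) ≤ y^(2p₁) for all y ≥ K. Define recursively v⁰ ≡ 1 on [K,∞) and v^q(ξ) = 2q·∫_K^ξ exp(2·V̄(y₁)) · ( ∫_{y₁}^∞ v^{q−1}(y₂)·exp(−2·V̄(y₂)) dy₂ ) dy₁ for integers q ≥ 1. Then for every integer q with 1 ≤ q < q₀ := (1 + 2p₁)/(2(1 + p₁ − p₂)), all the integrals appearing in the definition of v^q are finite, and there exists a constant C_q (depending on q, p₁, p₂, K) such that v^q(ξ) ≤ C_q·ξ^(2q(1+p₁−p₂)) for all ξ ≥ K. -/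

import Mathlib

/-!
One step of the recursion turns growth `O(ξ^a)` into growth `O(ξ^(a + 2(1 + p₁ - p₂)))`. Against
`e^{-2V̄(y)} ≤ y^{-2p₂}` the inner integrand is `O(y^(a - 2p₂))`, integrable at infinity as long as
`a < 2p₂ - 1`, with tail `O(y^(a - 2p₂ + 1))`; the factor `e^{2V̄(y)} ≤ y^{2p₁}` and the outer
integration over `[K, ξ]` add `2p₁ + 1` to the exponent. Starting from `a = 0`, the exponents
`2n(1 + p₁ - p₂)` reached for `n < q` stay below `2p₂ - 1` precisely because `q < q₀`.
The `v^n` are not assumed measurable: each is monotone on `[K, ∞)`, and this is carried along with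
the bound.
-/

open MeasureTheory Set Real
open scoped Interval

lemma integrableOn_Ioi_of_le_rpow {f : ℝ → ℝ} {x C s : ℝ} (hx : 0 < x) (hs : s < -1)
    (hf : AEStronglyMeasurable f (volume.restrict (Ioi x)))
    (hf0 : ∀ y ∈ Ioi x, 0 ≤ f y) (hfC : ∀ y ∈ Ioi x, f y ≤ C * y ^ s) :
    IntegrableOn f (Ioi x) := by
  refine Integrable.mono' ((integrableOn_Ioi_rpow_of_lt hs hx).const_mul C) hf ?_
  filter_upwards [ae_restrict_mem measurableSet_Ioi] with y hy
  rw [norm_of_nonneg (hf0 y hy)]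
  exact hfC y hy

lemma setIntegral_Ioi_le_of_le_rpow {f : ℝ → ℝ} {x C s : ℝ} (hx : 0 < x) (hs : s < -1)
    (hf : IntegrableOn f (Ioi x)) (hfC : ∀ y ∈ Ioi x, f y ≤ C * y ^ s) :
    ∫ y in Ioi x, f y ≤ C / (-(s + 1)) * x ^ (s + 1) :=
  calc ∫ y in Ioi x, f y ≤ ∫ y in Ioi x, C * y ^ s :=
        setIntegral_mono_on hf ((integrableOn_Ioi_rpow_of_lt hs hx).const_mul C)
          measurableSet_Ioi hfC
    _ = C / (-(s + 1)) * x ^ (s + 1) := by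
        rw [integral_const_mul, integral_Ioi_rpow_of_lt hs hx, div_neg]; ring

lemma antitoneOn_setIntegral_Ioi {f : ℝ → ℝ} {K : ℝ} (hf : IntegrableOn f (Ioi K))
    (hf0 : ∀ y ∈ Ioi K, 0 ≤ f y) : AntitoneOn (fun x => ∫ y in Ioi x, f y) (Ici K) := by
  intro x hx x' _ hxx'
  refine setIntegral_mono_set (hf.mono_set (Ioi_subset_Ioi hx)) ?_
    (Ioi_subset_Ioi hxx').eventuallyLE
  filter_upwards [ae_restrict_mem measurableSet_Ioi] with y hy
  exact hf0 y (mem_Ioi.2 (hx.trans_lt hy))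

-- `e^{-2V}` is the speed density of the diffusion `dy = dw - V'(y) dt`.
noncomputable def speedTail (V w : ℝ → ℝ) (y : ℝ) : ℝ :=
  ∫ z in Ioi y, w z * exp (-(2 * V z))

structure IsPowerBounded (K a C : ℝ) (w : ℝ → ℝ) : Prop where
  monotoneOn : MonotoneOn w (Ici K)
  nonneg : ∀ y ∈ Ici K, 0 ≤ w y
  le_rpow : ∀ y ∈ Ici K, w y ≤ C * y ^ a

namespace IsPowerBounded

variable {K p₁ p₂ a C : ℝ} {V w : ℝ → ℝ}

lemma congr {w' : ℝ → ℝ} (hw : IsPowerBounded K a C w) (h : EqOn w w' (Ici K)) :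
    IsPowerBounded K a C w' where
  monotoneOn := hw.monotoneOn.congr h
  nonneg y hy := h hy ▸ hw.nonneg y hy
  le_rpow y hy := h hy ▸ hw.le_rpow y hy

lemma const_nonneg (hw : IsPowerBounded K a C w) (hK : 0 < K) : 0 ≤ C :=
  nonneg_of_mul_nonneg_left ((hw.nonneg K self_mem_Ici).trans (hw.le_rpow K self_mem_Ici))
    (rpow_pos_of_pos hK a)

lemma mul_exp_neg_le_rpow (hw : IsPowerBounded K a C w) (hK : 0 < K)
    (hlb : ∀ y, K ≤ y → y ^ (2 * p₂) ≤ exp (2 * V y)) {y : ℝ} (hy : K ≤ y) :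
    w y * exp (-(2 * V y)) ≤ C * y ^ (a - 2 * p₂) := by
  have hy0 : 0 < y := hK.trans_le hy
  have hexp : exp (-(2 * V y)) ≤ y ^ (-(2 * p₂)) := by
    rw [exp_neg, rpow_neg hy0.le]
    exact inv_anti₀ (rpow_pos_of_pos hy0 _) (hlb y hy)
  calc w y * exp (-(2 * V y)) ≤ C * y ^ a * y ^ (-(2 * p₂)) :=
        mul_le_mul (hw.le_rpow y hy) hexp (exp_pos _).le
          ((hw.nonneg y hy).trans (hw.le_rpow y hy))
    _ = C * y ^ (a - 2 * p₂) := by rw [mul_assoc, ← rpow_add hy0, sub_eq_add_neg]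

lemma integrableOn_mul_exp_neg (hw : IsPowerBounded K a C w) (hK : 0 < K) (hV : Measurable V)
    (hlb : ∀ y, K ≤ y → y ^ (2 * p₂) ≤ exp (2 * V y)) (ha : a < 2 * p₂ - 1) {x : ℝ}
    (hx : K ≤ x) : IntegrableOn (fun z => w z * exp (-(2 * V z))) (Ioi x) := by
  have hxK : Ioi x ⊆ Ici K := fun z hz => hx.trans hz.le
  refine integrableOn_Ioi_of_le_rpow (hK.trans_le hx) (by linarith) ?_
    (fun z hz => mul_nonneg (hw.nonneg z (hxK hz)) (exp_pos _).le)
    (fun z hz => hw.mul_exp_neg_le_rpow hK hlb (hxK hz))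
  exact ((aemeasurable_restrict_of_monotoneOn measurableSet_Ioi
    (hw.monotoneOn.mono hxK)).mul (by fun_prop)).aestronglyMeasurable

lemma speedTail_nonneg (hw : IsPowerBounded K a C w) {x : ℝ} (hx : K ≤ x) :
    0 ≤ speedTail V w x :=
  setIntegral_nonneg measurableSet_Ioi fun z hz =>
    mul_nonneg (hw.nonneg z (hx.trans hz.le)) (exp_pos _).le

lemma speedTail_le (hw : IsPowerBounded K a C w) (hK : 0 < K) (hV : Measurable V)
    (hlb : ∀ y, K ≤ y → y ^ (2 * p₂) ≤ exp (2 * V y)) (ha : a < 2 * p₂ - 1) {x : ℝ}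
    (hx : K ≤ x) : speedTail V w x ≤ C / (2 * p₂ - 1 - a) * x ^ (a - 2 * p₂ + 1) := by
  have h := setIntegral_Ioi_le_of_le_rpow (hK.trans_le hx) (by linarith)
    (hw.integrableOn_mul_exp_neg hK hV hlb ha hx)
    (fun z hz => hw.mul_exp_neg_le_rpow hK hlb (hx.trans hz.le))
  rwa [show 2 * p₂ - 1 - a = -(a - 2 * p₂ + 1) by ring]

lemma antitoneOn_speedTail (hw : IsPowerBounded K a C w) (hK : 0 < K) (hV : Measurable V)
    (hlb : ∀ y, K ≤ y → y ^ (2 * p₂) ≤ exp (2 * V y)) (ha : a < 2 * p₂ - 1) :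
    AntitoneOn (speedTail V w) (Ici K) :=
  antitoneOn_setIntegral_Ioi (hw.integrableOn_mul_exp_neg hK hV hlb ha le_rfl)
    fun z hz => mul_nonneg (hw.nonneg z (mem_Ici.2 hz.le)) (exp_pos _).le

lemma exp_mul_speedTail_le (hw : IsPowerBounded K a C w) (hK : 0 < K) (hV : Measurable V)
    (hlb : ∀ y, K ≤ y → y ^ (2 * p₂) ≤ exp (2 * V y))
    (hub : ∀ y, K ≤ y → exp (2 * V y) ≤ y ^ (2 * p₁)) (ha : a < 2 * p₂ - 1) {y : ℝ}
    (hy : K ≤ y) :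
    exp (2 * V y) * speedTail V w y ≤ C / (2 * p₂ - 1 - a) * y ^ (a + 2 * (p₁ - p₂) + 1) := by
  have hy0 : 0 < y := hK.trans_le hy
  calc exp (2 * V y) * speedTail V w y
      ≤ y ^ (2 * p₁) * (C / (2 * p₂ - 1 - a) * y ^ (a - 2 * p₂ + 1)) :=
        mul_le_mul (hub y hy) (hw.speedTail_le hK hV hlb ha hy) (hw.speedTail_nonneg hy)
          (rpow_nonneg hy0.le _)
    _ = C / (2 * p₂ - 1 - a) * y ^ (a + 2 * (p₁ - p₂) + 1) := by
        rw [mul_left_comm, ← rpow_add hy0]; congr 2; ring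

lemma intervalIntegrable_exp_mul_speedTail (hw : IsPowerBounded K a C w) (hK : 0 < K)
    (hV : Measurable V) (hlb : ∀ y, K ≤ y → y ^ (2 * p₂) ≤ exp (2 * V y))
    (hub : ∀ y, K ≤ y → exp (2 * V y) ≤ y ^ (2 * p₁)) (ha : a < 2 * p₂ - 1) {ξ : ℝ}
    (hξ : K ≤ ξ) :
    IntervalIntegrable (fun y => exp (2 * V y) * speedTail V w y) volume K ξ := by
  have hsub : Ι K ξ ⊆ Ici K := by
    rw [uIoc_of_le hξ]; exact Ioc_subset_Ioi_self.trans Ioi_subset_Ici_self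
  have hzero : (0 : ℝ) ∉ [[K, ξ]] := by
    rw [uIcc_of_le hξ]; exact fun h => (hK.trans_le h.1).false
  refine ((intervalIntegral.intervalIntegrable_rpow (r := a + 2 * (p₁ - p₂) + 1)
    (Or.inr hzero)).const_mul (C / (2 * p₂ - 1 - a))).mono_fun' ?_ ?_
  · exact ((by fun_prop : Measurable fun y => exp (2 * V y)).aemeasurable.mul
      (aemeasurable_restrict_of_antitoneOn measurableSet_uIoc
        ((hw.antitoneOn_speedTail hK hV hlb ha).mono hsub))).aestronglyMeasurable
  · filter_upwards [ae_restrict_mem measurableSet_uIoc] with y hy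
    rw [norm_of_nonneg (mul_nonneg (exp_pos _).le (hw.speedTail_nonneg (hsub hy)))]
    exact hw.exp_mul_speedTail_le hK hV hlb hub ha (hsub hy)

theorem integral_exp_mul_speedTail (hw : IsPowerBounded K a C w) (hK : 0 < K)
    (hV : Measurable V) (hlb : ∀ y, K ≤ y → y ^ (2 * p₂) ≤ exp (2 * V y))
    (hub : ∀ y, K ≤ y → exp (2 * V y) ≤ y ^ (2 * p₁)) (ha₀ : 0 ≤ a) (hp : p₂ ≤ p₁)
    (ha : a < 2 * p₂ - 1) {c : ℝ} (hc : 0 ≤ c) :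
    IsPowerBounded K (a + 2 * (1 + p₁ - p₂)) (c * (C / (2 * p₂ - 1 - a)))
      (fun ξ => c * ∫ y in K..ξ, exp (2 * V y) * speedTail V w y) := by
  set D := C / (2 * p₂ - 1 - a)
  have hD : 0 ≤ D := div_nonneg (hw.const_nonneg hK) (by linarith)
  have hb : 0 ≤ a + 2 * (p₁ - p₂) + 1 := by linarith
  have hF₀ : ∀ y ∈ Ici K, 0 ≤ exp (2 * V y) * speedTail V w y := fun y hy =>
    mul_nonneg (exp_pos _).le (hw.speedTail_nonneg hy)
  refine ⟨fun ξ₁ hξ₁ ξ₂ hξ₂ h₁₂ => ?_, fun ξ hξ => ?_, fun ξ (hξ : K ≤ ξ) => ?_⟩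
  · refine mul_le_mul_of_nonneg_left (intervalIntegral.integral_mono_interval le_rfl hξ₁ h₁₂
      ?_ (hw.intervalIntegrable_exp_mul_speedTail hK hV hlb hub ha hξ₂)) hc
    filter_upwards [ae_restrict_mem measurableSet_Ioc] with y hy
    exact hF₀ y (mem_Ici.2 hy.1.le)
  · exact mul_nonneg hc (intervalIntegral.integral_nonneg hξ fun y hy => hF₀ y hy.1)
  · have hξ₀ : 0 < ξ := hK.trans_le hξ
    have hnorm : ∀ y ∈ Ι K ξ,
        ‖exp (2 * V y) * speedTail V w y‖ ≤ D * ξ ^ (a + 2 * (p₁ - p₂) + 1) := by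
      intro y hy
      rw [uIoc_of_le hξ] at hy
      have hKy : K ≤ y := hy.1.le
      rw [norm_of_nonneg (hF₀ y hKy)]
      exact (hw.exp_mul_speedTail_le hK hV hlb hub ha hKy).trans
        (mul_le_mul_of_nonneg_left (rpow_le_rpow (hK.trans_le hKy).le hy.2 hb) hD)
    calc c * ∫ y in K..ξ, exp (2 * V y) * speedTail V w y
        ≤ c * (D * ξ ^ (a + 2 * (p₁ - p₂) + 1) * |ξ - K|) := mul_le_mul_of_nonneg_left
          ((le_abs_self _).trans (intervalIntegral.norm_integral_le_of_norm_le_const hnorm)) hc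
      _ ≤ c * (D * ξ ^ (a + 2 * (p₁ - p₂) + 1) * ξ) := by
          gcongr
          rw [abs_of_nonneg (by linarith)]
          linarith
      _ = c * D * ξ ^ (a + 2 * (1 + p₁ - p₂)) := by
          rw [show a + 2 * (1 + p₁ - p₂) = a + 2 * (p₁ - p₂) + 1 + 1 by ring,
            rpow_add_one hξ₀.ne' (a + 2 * (p₁ - p₂) + 1)]; ring

end IsPowerBounded

theorem hitting_time_moments_polynomial_bound_general
    (K p₁ p₂ : ℝ) (hK : 1 ≤ K) (hp : p₂ ≤ p₁)
    (Vbar : ℝ → ℝ) (hmeas : Measurable Vbar)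
    (hlb : ∀ y : ℝ, K ≤ y → y ^ (2 * p₂) ≤ Real.exp (2 * Vbar y))
    (hub : ∀ y : ℝ, K ≤ y → Real.exp (2 * Vbar y) ≤ y ^ (2 * p₁))
    (v : ℕ → ℝ → ℝ)
    (hv0 : ∀ ξ : ℝ, K ≤ ξ → v 0 ξ = 1)
    (hvrec : ∀ q : ℕ, 1 ≤ q → ∀ ξ : ℝ, K ≤ ξ →
      v q ξ = 2 * q * ∫ y₁ in K..ξ, Real.exp (2 * Vbar y₁) *
        ∫ y₂ in Set.Ioi y₁, v (q - 1) y₂ * Real.exp (-(2 * Vbar y₂)))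
    (q : ℕ)
    (hq : (q : ℝ) < (1 + 2 * p₁) / (2 * (1 + p₁ - p₂))) :
    (∀ q' : ℕ, 1 ≤ q' → q' ≤ q →
      (∀ y₁ : ℝ, K ≤ y₁ →
          IntegrableOn
            (fun y₂ => v (q' - 1) y₂ * Real.exp (-(2 * Vbar y₂)))
            (Set.Ioi y₁)) ∧
        ∀ ξ : ℝ, K ≤ ξ →
          IntervalIntegrable
            (fun y₁ => Real.exp (2 * Vbar y₁) *
              ∫ y₂ in Set.Ioi y₁, v (q' - 1) y₂ * Real.exp (-(2 * Vbar y₂)))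
            volume K ξ) ∧
      ∃ Cq : ℝ, ∀ ξ : ℝ, K ≤ ξ →
        v q ξ ≤ Cq * ξ ^ (2 * (q : ℝ) * (1 + p₁ - p₂)) := by
  have hK₀ : 0 < K := by linarith
  have hd : 0 < 1 + p₁ - p₂ := by linarith
  have hexp : ∀ n : ℕ, n < q → 2 * (n : ℝ) * (1 + p₁ - p₂) < 2 * p₂ - 1 := by
    intro n hn
    have hn' : (n : ℝ) + 1 ≤ q := by exact_mod_cast hn
    have hq' := (lt_div_iff₀ (by linarith)).1 hq
    nlinarith
  have hbound : ∀ n ≤ q, ∃ C, IsPowerBounded K (2 * n * (1 + p₁ - p₂)) C (v n) := by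
    intro n
    induction n with
    | zero =>
      refine fun _ => ⟨1, fun x hx y hy _ => by rw [hv0 x hx, hv0 y hy],
        fun y hy => by rw [hv0 y hy]; exact zero_le_one, fun y hy => by simp [hv0 y hy]⟩
    | succ n ih =>
      intro hn
      obtain ⟨C, hC⟩ := ih (by omega)
      have hstep := hC.integral_exp_mul_speedTail hK₀ hmeas hlb hub (by positivity) hp
        (hexp n hn) (c := 2 * (n + 1 : ℕ)) (by positivity)
      rw [show 2 * (n : ℝ) * (1 + p₁ - p₂) + 2 * (1 + p₁ - p₂)
        = 2 * (n + 1 : ℕ) * (1 + p₁ - p₂) by push_cast; ring] at hstep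
      exact ⟨_, hstep.congr fun ξ hξ => (hvrec (n + 1) (by omega) ξ hξ).symm⟩
  refine ⟨fun q' hq'₁ hq'q => ?_, ?_⟩
  · obtain ⟨C, hC⟩ := hbound (q' - 1) (by omega)
    have ha := hexp (q' - 1) (by omega)
    exact ⟨fun y₁ hy₁ => hC.integrableOn_mul_exp_neg hK₀ hmeas hlb ha hy₁,
      fun ξ hξ => hC.intervalIntegrable_exp_mul_speedTail hK₀ hmeas hlb hub ha hξ⟩
  · obtain ⟨C, hC⟩ := hbound q le_rfl
    exact ⟨C, hC.le_rpow⟩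

/-- Under `y^(2p₂) ≤ exp(2·V̄(y)) ≤ y^(2p₁)` for `y ≥ K` (with
`K ≥ 1`, `1/2 < p₂ ≤ p₁`), define recursively `v⁰ ≡ 1` on `[K,∞)` and
`v^q(ξ) = 2q·∫_K^ξ e^{2V̄(y₁)} (∫_{y₁}^∞ v^{q−1}(y₂) e^{−2V̄(y₂)} dy₂) dy₁`
for integers `q ≥ 1`.  Then for every integer `q` with
`1 ≤ q < q₀ = (1 + 2p₁)/(2(1 + p₁ − p₂))`, all the integrals appearing in
the definition of `v^q` are finite, and there is a constant `C_q` with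
`v^q(ξ) ≤ C_q·ξ^(2q(1+p₁−p₂))` for all `ξ ≥ K`. -/
theorem hitting_time_moments_polynomial_bound
    (K p₁ p₂ : ℝ) (hK : 1 ≤ K) (hp₂ : 1 / 2 < p₂) (hp : p₂ ≤ p₁)
    (Vbar : ℝ → ℝ) (hmeas : Measurable Vbar)
    (hloc : ∀ a b : ℝ, 0 < a → ∃ M : ℝ, ∀ y ∈ Set.Icc a b, |Vbar y| ≤ M)
    (hlb : ∀ y : ℝ, K ≤ y → y ^ (2 * p₂) ≤ Real.exp (2 * Vbar y))
    (hub : ∀ y : ℝ, K ≤ y → Real.exp (2 * Vbar y) ≤ y ^ (2 * p₁))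
    (v : ℕ → ℝ → ℝ)
    (hv0 : ∀ ξ : ℝ, K ≤ ξ → v 0 ξ = 1)
    (hvrec : ∀ q : ℕ, 1 ≤ q → ∀ ξ : ℝ, K ≤ ξ →
      v q ξ = 2 * q * ∫ y₁ in K..ξ, Real.exp (2 * Vbar y₁) *
        ∫ y₂ in Set.Ioi y₁, v (q - 1) y₂ * Real.exp (-(2 * Vbar y₂)))
    (q : ℕ) (hq1 : 1 ≤ q)
    (hq : (q : ℝ) < (1 + 2 * p₁) / (2 * (1 + p₁ - p₂))) :
    (∀ q' : ℕ, 1 ≤ q' → q' ≤ q →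
      (∀ y₁ : ℝ, K ≤ y₁ →
          IntegrableOn
            (fun y₂ => v (q' - 1) y₂ * Real.exp (-(2 * Vbar y₂)))
            (Set.Ioi y₁)) ∧
        ∀ ξ : ℝ, K ≤ ξ →
          IntervalIntegrable
            (fun y₁ => Real.exp (2 * Vbar y₁) *
              ∫ y₂ in Set.Ioi y₁, v (q' - 1) y₂ * Real.exp (-(2 * Vbar y₂)))
            volume K ξ) ∧
      ∃ Cq : ℝ, ∀ ξ : ℝ, K ≤ ξ →
        v q ξ ≤ Cq * ξ ^ (2 * (q : ℝ) * (1 + p₁ - p₂)) :=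
  hitting_time_moments_polynomial_bound_general K p₁ p₂ hK hp Vbar hmeas hlb hub v hv0 hvrec q hq
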